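/- Assume μ1, μ2, σ1, σ2 > 0 and ρ ∈ (−1,1). Let g(x) := ∫₀^∞ s·f(x·s, s) ds, P(Q1) := ∫₀^∞∫₀^∞ f(s1,s2) ds1 ds2, ω₀ := (ρμ2/σ2 − μ1/σ1)/√(2(1−ρ²)), and f₀ := ((σ1/σ2)·√(1−ρ²)/(2π·P(Q1)))·exp(−μ2²/(2σ2²))·(exp(−ω₀²) − √π·ω₀·erfc(ω₀)). Then the conditional density F(x) := g(x)/P(Q1) of X1/X2 on the first quadrant has a fat tail with exponent 2: lim_{x → ∞} x²·F(x) = f₀. -/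

import Mathlib

open Real MeasureTheory Set

/-- The bivariate normal density with means `μ1, μ2`, standard deviations `σ1, σ2`
and correlation `ρ`. -/
noncomputable def bvnDensity (μ1 μ2 σ1 σ2 ρ : ℝ) (s1 s2 : ℝ) : ℝ :=
  (2 * π * σ1 * σ2 * Real.sqrt (1 - ρ ^ 2))⁻¹ *
    Real.exp (-(1 / 2) * (((s2 - μ2) / σ2) ^ 2 +
      (s1 - μ1 - ρ * (σ1 / σ2) * (s2 - μ2)) ^ 2 / (σ1 ^ 2 * (1 - ρ ^ 2))))

/-- The complementary error function. -/
noncomputable def erfc (z : ℝ) : ℝ :=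
  (2 / Real.sqrt π) * ∫ u in Set.Ioi z, Real.exp (-u ^ 2)

/-- `h(ω) = 1 − √π · ω · exp(ω²) · erfc(ω)`. -/
noncomputable def hfun (ω : ℝ) : ℝ :=
  1 - Real.sqrt π * ω * Real.exp (ω ^ 2) * erfc ω

/-- The coefficient `A(x)`. -/
noncomputable def coefA (σ1 σ2 ρ : ℝ) (x : ℝ) : ℝ :=
  1 / σ2 ^ 2 + (x - ρ * σ1 / σ2) ^ 2 / (σ1 ^ 2 * (1 - ρ ^ 2))

/-- The coefficient `B(x)`. -/
noncomputable def coefB (μ1 μ2 σ1 σ2 ρ : ℝ) (x : ℝ) : ℝ :=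
  -μ2 / σ2 ^ 2 + (x - ρ * σ1 / σ2) * (μ2 * ρ * σ1 / σ2 - μ1) / (σ1 ^ 2 * (1 - ρ ^ 2))

/-- The constant `C`. -/
noncomputable def coefC (μ1 μ2 σ1 σ2 ρ : ℝ) : ℝ :=
  μ2 ^ 2 / σ2 ^ 2 + (ρ * μ2 / σ2 - μ1 / σ1) ^ 2 / (1 - ρ ^ 2)

/-- `ω(x) = B(x)/√(2A(x))`. -/
noncomputable def omegaFun (μ1 μ2 σ1 σ2 ρ : ℝ) (x : ℝ) : ℝ :=
  coefB μ1 μ2 σ1 σ2 ρ x / Real.sqrt (2 * coefA σ1 σ2 ρ x)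

/-- `g(x) = ∫₀^∞ s f(xs, s) ds`, the unnormalized first-quadrant quotient density. -/
noncomputable def quotDensQ1 (μ1 μ2 σ1 σ2 ρ : ℝ) (x : ℝ) : ℝ :=
  ∫ s in Set.Ioi (0 : ℝ), s * bvnDensity μ1 μ2 σ1 σ2 ρ (x * s) s

/-- `P(Q1) = ∫₀^∞ ∫₀^∞ f(s1, s2) ds1 ds2`. -/
noncomputable def probQ1 (μ1 μ2 σ1 σ2 ρ : ℝ) : ℝ :=
  ∫ s2 in Set.Ioi (0 : ℝ), ∫ s1 in Set.Ioi (0 : ℝ), bvnDensity μ1 μ2 σ1 σ2 ρ s1 s2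

/-! Along the ray `s ↦ (x s, s)` the exponent of the bivariate normal density is the quadratic
`A(x) s² + 2 B(x) s + C` in `s`, so completing the square turns `g(x)` into a Gaussian tail
integral: `g(x) = e^{-C/2} h(ω(x)) / (2π σ1 σ2 √(1-ρ²) A(x))`. As `x → ∞`, `A(x) ~ x² / (σ1²(1-ρ²))`
and `ω(x) → ω₀` by continuity, and `e^{-C/2} = e^{-μ2²/(2σ2²)} e^{-ω₀²}` produces the constant `f₀`. -/

open Filter Topology

lemma integral_Ioi_comp_add_right {E : Type*} [NormedAddCommGroup E] [NormedSpace ℝ E]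
    (f : ℝ → E) (a m : ℝ) : ∫ x in Ioi a, f (x + m) = ∫ x in Ioi (a + m), f x := by
  rw [← integral_indicator measurableSet_Ioi, ← integral_indicator measurableSet_Ioi,
    ← integral_add_right_eq_self (fun x => (Ioi (a + m)).indicator f x) m]
  congr 1 with x
  simp only [indicator_apply, mem_Ioi, add_lt_add_iff_right]

lemma MeasureTheory.Integrable.continuous_integral_Ioi {E : Type*} [NormedAddCommGroup E]
    [NormedSpace ℝ E] {μ : Measure ℝ} [NullSingletonClass μ] {f : ℝ → E} (hf : Integrable f μ) :
    Continuous fun a => ∫ x in Ioi a, f x ∂μ := by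
  have h (a : ℝ) : ∫ x in Ioi a, f x ∂μ = ∫ x in Ioi 0, f x ∂μ - ∫ x in (0 : ℝ)..a, f x ∂μ := by
    rw [← intervalIntegral.integral_Ioi_sub_Ioi' hf.integrableOn hf.integrableOn, sub_sub_cancel]
  exact (continuous_const.sub (hf.continuous_primitive 0)).congr fun a => (h a).symm

@[fun_prop]
lemma continuous_erfc : Continuous erfc :=
  continuous_const.mul (by simpa using (integrable_exp_neg_mul_sq one_pos).continuous_integral_Ioi)

lemma continuous_hfun : Continuous hfun := by
  unfold hfun
  fun_prop

lemma hfun_mul_exp_neg_sq (ω : ℝ) :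
    hfun ω * exp (-ω ^ 2) = exp (-ω ^ 2) - √π * ω * erfc ω := by
  rw [hfun, sub_mul, one_mul, mul_right_comm _ (exp _), mul_assoc _ (exp _), ← exp_add,
    add_neg_cancel, exp_zero, mul_one]

lemma integral_Ioi_mul_exp_neg_mul_sq {b : ℝ} (hb : 0 < b) (m : ℝ) :
    ∫ t in Ioi m, t * exp (-b * t ^ 2) = exp (-b * m ^ 2) / (2 * b) := by
  have hderiv : ∀ t ∈ Ici m, HasDerivAt (fun t => -exp (-b * t ^ 2) / (2 * b))
      (t * exp (-b * t ^ 2)) t := fun t _ => by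
    refine (((hasDerivAt_pow 2 t).const_mul (-b)).exp.neg.div_const (2 * b)).congr_deriv ?_
    field_simp
    ring
  have hlim : Tendsto (fun t => -exp (-b * t ^ 2) / (2 * b)) atTop (𝓝 0) := by
    simpa using (tendsto_exp_atBot.comp ((tendsto_pow_atTop two_ne_zero).const_mul_atTop_of_neg
      (neg_neg_of_pos hb))).neg.div_const (2 * b)
  rw [integral_Ioi_of_hasDerivAt_of_tendsto' hderiv
    (integrable_mul_exp_neg_mul_sq hb).integrableOn hlim]
  ring

lemma integral_Ioi_exp_neg_mul_sq {b : ℝ} (hb : 0 < b) (m : ℝ) :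
    ∫ t in Ioi m, exp (-b * t ^ 2) = √π / (2 * √b) * erfc (√b * m) := by
  have hsq (t : ℝ) : exp (-b * t ^ 2) = exp (-(√b * t) ^ 2) := by
    rw [mul_pow, sq_sqrt hb.le, neg_mul]
  simp_rw [hsq]
  rw [integral_comp_mul_left_Ioi (fun u => exp (-u ^ 2)) m (sqrt_pos.2 hb), erfc, smul_eq_mul]
  have := sqrt_pos.2 pi_pos
  field_simp

lemma integral_Ioi_sub_mul_exp_neg_mul_sq {b : ℝ} (hb : 0 < b) (m : ℝ) :
    ∫ t in Ioi m, (t - m) * exp (-b * t ^ 2) = exp (-b * m ^ 2) / (2 * b) * hfun (√b * m) := by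
  have hint₁ : IntegrableOn (fun t => t * exp (-b * t ^ 2)) (Ioi m) :=
    (integrable_mul_exp_neg_mul_sq hb).integrableOn
  have hint₂ : IntegrableOn (fun t => m * exp (-b * t ^ 2)) (Ioi m) :=
    ((integrable_exp_neg_mul_sq hb).const_mul m).integrableOn
  simp_rw [sub_mul]
  rw [integral_sub hint₁ hint₂, integral_const_mul, integral_Ioi_mul_exp_neg_mul_sq hb,
    integral_Ioi_exp_neg_mul_sq hb, hfun, mul_pow, sq_sqrt hb.le, neg_mul, exp_neg]
  have := sqrt_pos.2 hb
  field_simp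
  linear_combination m * exp (b * m ^ 2) * √π * erfc (m * √b) * sq_sqrt hb.le

lemma integral_Ioi_zero_mul_exp_neg_quadratic {A : ℝ} (hA : 0 < A) (B C : ℝ) :
    ∫ s in Ioi (0 : ℝ), s * exp (-(1 / 2) * (A * s ^ 2 + 2 * B * s + C))
      = exp (-C / 2) / A * hfun (B / √(2 * A)) := by
  have hsquare (s : ℝ) : s * exp (-(1 / 2) * (A * s ^ 2 + 2 * B * s + C))
      = exp (A / 2 * (B / A) ^ 2 - C / 2) *
        ((s + B / A - B / A) * exp (-(A / 2) * (s + B / A) ^ 2)) := by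
    rw [add_sub_cancel_right, mul_left_comm, ← exp_add]
    congr 2
    field_simp
    ring
  simp_rw [hsquare]
  rw [integral_const_mul,
    integral_Ioi_comp_add_right (fun t => (t - B / A) * exp (-(A / 2) * t ^ 2)), zero_add,
    integral_Ioi_sub_mul_exp_neg_mul_sq (half_pos hA), ← mul_assoc, ← mul_div_assoc,
    ← exp_add]
  have hω : √(A / 2) * (B / A) = B / √(2 * A) := by
    rw [show A / 2 = (2 * A) / 2 ^ 2 by ring, sqrt_div' _ (by positivity), sqrt_sq zero_le_two]
    have := sqrt_pos.2 (by positivity : 0 < 2 * A)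
    field_simp
    rw [sq_sqrt (by positivity)]
  rw [hω, show A / 2 * (B / A) ^ 2 - C / 2 + -(A / 2) * (B / A) ^ 2 = -C / 2 by ring,
    show 2 * (A / 2) = A by ring]

section BivariateNormal

variable {μ1 μ2 σ1 σ2 ρ : ℝ}

lemma coefA_pos (hσ2 : σ2 ≠ 0) (hρ : ρ ^ 2 ≤ 1) (x : ℝ) : 0 < coefA σ1 σ2 ρ x :=
  add_pos_of_pos_of_nonneg (by positivity)
    (div_nonneg (sq_nonneg _) (mul_nonneg (sq_nonneg _) (sub_nonneg.2 hρ)))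

lemma bvnDensity_mul_eq_exp_quadratic (hσ1 : σ1 ≠ 0) (hσ2 : σ2 ≠ 0) (hρ : 1 - ρ ^ 2 ≠ 0) (x s : ℝ) :
    bvnDensity μ1 μ2 σ1 σ2 ρ (x * s) s = (2 * π * σ1 * σ2 * √(1 - ρ ^ 2))⁻¹ *
      exp (-(1 / 2) * (coefA σ1 σ2 ρ x * s ^ 2 + 2 * coefB μ1 μ2 σ1 σ2 ρ x * s +
        coefC μ1 μ2 σ1 σ2 ρ)) := by
  unfold bvnDensity coefA coefB coefC
  congr 3
  field_simp
  ring

lemma quotDensQ1_eq (hσ1 : σ1 ≠ 0) (hσ2 : σ2 ≠ 0) (hρ : 0 < 1 - ρ ^ 2) (x : ℝ) :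
    quotDensQ1 μ1 μ2 σ1 σ2 ρ x = (2 * π * σ1 * σ2 * √(1 - ρ ^ 2))⁻¹ *
      (exp (-coefC μ1 μ2 σ1 σ2 ρ / 2) / coefA σ1 σ2 ρ x * hfun (omegaFun μ1 μ2 σ1 σ2 ρ x)) := by
  simp_rw [quotDensQ1, bvnDensity_mul_eq_exp_quadratic hσ1 hσ2 hρ.ne', mul_left_comm _ (_ : ℝ)⁻¹]
  rw [integral_const_mul, integral_Ioi_zero_mul_exp_neg_quadratic
    (coefA_pos hσ2 (by linarith) x), omegaFun]

lemma exp_neg_coefC_div_two (hσ2 : σ2 ≠ 0) (hρ : 0 < 1 - ρ ^ 2) :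
    exp (-coefC μ1 μ2 σ1 σ2 ρ / 2) = exp (-μ2 ^ 2 / (2 * σ2 ^ 2)) *
      exp (-((ρ * μ2 / σ2 - μ1 / σ1) / √(2 * (1 - ρ ^ 2))) ^ 2) := by
  rw [← exp_add, div_pow, sq_sqrt (by linarith), coefC]
  congr 1
  field_simp
  ring

lemma tendsto_coefA_div_sq :
    Tendsto (fun x => coefA σ1 σ2 ρ x / x ^ 2) atTop (𝓝 (1 / (σ1 ^ 2 * (1 - ρ ^ 2)))) := by
  -- `coefA x / x ^ 2` is a polynomial in `x⁻¹`, and `x⁻¹ → 0`.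
  have hF : Continuous fun y : ℝ => y ^ 2 / σ2 ^ 2 +
      (1 - ρ * σ1 / σ2 * y) ^ 2 / (σ1 ^ 2 * (1 - ρ ^ 2)) := by fun_prop
  refine Tendsto.congr' ?_ (by simpa using (hF.tendsto 0).comp tendsto_inv_atTop_zero)
  filter_upwards [eventually_ne_atTop 0] with x hx
  simp only [Function.comp_apply, coefA]
  field_simp

lemma tendsto_coefB_div :
    Tendsto (fun x => coefB μ1 μ2 σ1 σ2 ρ x / x) atTop
      (𝓝 ((μ2 * ρ * σ1 / σ2 - μ1) / (σ1 ^ 2 * (1 - ρ ^ 2)))) := by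
  have hF : Continuous fun y : ℝ => -μ2 / σ2 ^ 2 * y +
      (1 - ρ * σ1 / σ2 * y) * (μ2 * ρ * σ1 / σ2 - μ1) / (σ1 ^ 2 * (1 - ρ ^ 2)) := by fun_prop
  refine Tendsto.congr' ?_ (by simpa using (hF.tendsto 0).comp tendsto_inv_atTop_zero)
  filter_upwards [eventually_ne_atTop 0] with x hx
  simp only [Function.comp_apply, coefB]
  field_simp

lemma tendsto_sq_div_coefA (hσ1 : σ1 ≠ 0) (hρ : 1 - ρ ^ 2 ≠ 0) :
    Tendsto (fun x => x ^ 2 / coefA σ1 σ2 ρ x) atTop (𝓝 (σ1 ^ 2 * (1 - ρ ^ 2))) := by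
  simpa using (tendsto_coefA_div_sq (σ2 := σ2)).inv₀ (by simp [hσ1, hρ])

lemma tendsto_omegaFun (hσ1 : 0 < σ1) (hρ : 0 < 1 - ρ ^ 2) :
    Tendsto (omegaFun μ1 μ2 σ1 σ2 ρ) atTop
      (𝓝 ((ρ * μ2 / σ2 - μ1 / σ1) / √(2 * (1 - ρ ^ 2)))) := by
  have hω₀ : (μ2 * ρ * σ1 / σ2 - μ1) / (σ1 ^ 2 * (1 - ρ ^ 2)) /
      √(2 * (1 / (σ1 ^ 2 * (1 - ρ ^ 2)))) = (ρ * μ2 / σ2 - μ1 / σ1) / √(2 * (1 - ρ ^ 2)) := by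
    rw [show 2 * (1 / (σ1 ^ 2 * (1 - ρ ^ 2))) = 2 * (1 - ρ ^ 2) / (σ1 * (1 - ρ ^ 2)) ^ 2 by
      field_simp, sqrt_div' _ (sq_nonneg _), sqrt_sq (by positivity)]
    have := sqrt_pos.2 (by positivity : 0 < 2 * (1 - ρ ^ 2))
    field_simp
  rw [← hω₀]
  refine ((tendsto_coefB_div (μ1 := μ1) (μ2 := μ2)).div ((continuous_sqrt.tendsto _).comp
    ((tendsto_coefA_div_sq (σ2 := σ2)).const_mul 2)) (by positivity)).congr' ?_
  filter_upwards [eventually_gt_atTop 0] with x hx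
  rw [Pi.div_apply, Function.comp_apply, mul_div_assoc', sqrt_div' _ (sq_nonneg x),
    sqrt_sq hx.le, div_div_div_cancel_right₀ hx.ne', omegaFun]

end BivariateNormal

theorem conditional_density_fat_tail
    (μ1 μ2 σ1 σ2 ρ : ℝ) (hσ1 : 0 < σ1) (hσ2 : 0 < σ2)
    (hρ : ρ ∈ Set.Ioo (-1 : ℝ) 1) :
    Filter.Tendsto
      (fun x : ℝ => x ^ 2 * (quotDensQ1 μ1 μ2 σ1 σ2 ρ x / probQ1 μ1 μ2 σ1 σ2 ρ))
      Filter.atTop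
      (nhds ((σ1 / σ2 * Real.sqrt (1 - ρ ^ 2) / (2 * π * probQ1 μ1 μ2 σ1 σ2 ρ)) *
        Real.exp (-μ2 ^ 2 / (2 * σ2 ^ 2)) *
        (Real.exp (-((ρ * μ2 / σ2 - μ1 / σ1) / Real.sqrt (2 * (1 - ρ ^ 2))) ^ 2) -
          Real.sqrt π * ((ρ * μ2 / σ2 - μ1 / σ1) / Real.sqrt (2 * (1 - ρ ^ 2))) *
            erfc ((ρ * μ2 / σ2 - μ1 / σ1) / Real.sqrt (2 * (1 - ρ ^ 2)))))) := by
  have hk : 0 < 1 - ρ ^ 2 := by nlinarith [hρ.1, hρ.2]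
  have hlim := ((tendsto_sq_div_coefA (σ2 := σ2) hσ1.ne' hk.ne').mul
    ((continuous_hfun.tendsto _).comp
      (tendsto_omegaFun (μ1 := μ1) (μ2 := μ2) (σ2 := σ2) hσ1 hk))).mul_const
      ((2 * π * σ1 * σ2 * √(1 - ρ ^ 2))⁻¹ * exp (-coefC μ1 μ2 σ1 σ2 ρ / 2) /
        probQ1 μ1 μ2 σ1 σ2 ρ)
  convert hlim using 2 with x
  · rw [quotDensQ1_eq hσ1.ne' hσ2.ne' hk, Function.comp_apply]
    ring
  · rw [exp_neg_coefC_div_two hσ2.ne' hk, ← hfun_mul_exp_neg_sq]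
    have := sqrt_pos.2 hk
    field_simp
    rw [sq_sqrt hk.le]
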